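/- Let k be a natural number, p a natural number with p ≥ R_k, and G a finite simple graph. Let v_0 be a vertex of G, let V_1 = N(v_0) be the set of neighbors of v_0, V_2 = V(G) \ V_1, and let W_2 = { u ∈ V_1 : |N(u) ∩ V_2| < p }. If |N(W_2) ∩ V_2| > (p−1)², then G contains a k-edge induced subgraph. Here N(W_2) denotes the union of the neighborhoods N(u) over all u ∈ W_2. -/

import Mathlib

/-- `G` contains a `k`-edge induced subgraph: there is a nonempty set `S` of vertices
such that the number of edges of `G` with both endpoints in `S` is exactly `k`. -/
def HasKEdgeInducedSubgraph {V : Type*} (G : SimpleGraph V) (k : ℕ) : Prop :=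
  ∃ S : Finset V, S.Nonempty ∧ {e ∈ G.edgeSet | ∀ v ∈ e, v ∈ S}.ncard = k

/-- The Ramsey number `R_k`: the least `N` such that every finite simple graph on at least `N`
vertices contains a clique of size `k` or an independent set of size `k`. -/
noncomputable def ramseyNumber (k : ℕ) : ℕ :=
  sInf {N : ℕ | ∀ (V : Type) (inst : Fintype V) (G : SimpleGraph V),
    N ≤ @Fintype.card V inst →
    (∃ S : Finset V, S.card = k ∧ ∀ u ∈ S, ∀ w ∈ S, u ≠ w → G.Adj u w) ∨
    (∃ S : Finset V, S.card = k ∧ ∀ u ∈ S, ∀ w ∈ S, u ≠ w → ¬ G.Adj u w)}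

/-!
Let `C ⊆ W₂` be a minimal family of vertices whose neighbourhoods cover `T = N(W₂) ∩ V₂`.
By minimality every `u ∈ C` has a private neighbour `x u ∈ T`, adjacent to no other vertex of
`C`; since each `u ∈ W₂` has fewer than `p` neighbours in `V₂`, `(p - 1)² < |T| ≤ |C| (p - 1)`,
so `|C| ≥ p ≥ R_k`. Ramsey's theorem gives `S ⊆ C` with `|S| = k`, a clique or an independent
set. An independent `S` together with `v₀`, which is adjacent to all of `W₂`, is a star with `k`
edges. A clique `S` carries pendant vertices `x a ∉ N(v₀)`; writing `k = C(j, 2) + t` with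
`t < j`, a `j`-clique inside `S` plus suitably many pendants spans exactly `k` edges, where a
discrete intermediate value argument absorbs the edges among the pendants themselves.
-/

open Finset

lemma Nat.exists_choose_two_add {k : ℕ} (hk : 3 ≤ k) :
    ∃ j t, j.choose 2 + t = k ∧ t < j ∧ j + t ≤ k := by
  have hsucc (n : ℕ) : (n + 1).choose 2 = n.choose 2 + n := by
    rw [Nat.choose_succ_succ', Nat.choose_one_right, add_comm]
  have hex : ∃ j, k < (j + 1).choose 2 := ⟨k, by
    have : 0 < k.choose 2 := Nat.choose_pos (by omega)
    rw [hsucc]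
    omega⟩
  obtain ⟨j, hkj, hjk⟩ : ∃ j, k < (j + 1).choose 2 ∧ j.choose 2 ≤ k := by
    refine ⟨Nat.find hex, Nat.find_spec hex, ?_⟩
    rcases Nat.eq_zero_or_eq_succ_pred (Nat.find hex) with h | h
    · simp [h]
    · rw [h]; exact not_lt.1 (Nat.find_min hex (by omega))
  have hj3 : 3 ≤ j := by
    by_contra! h
    have : (j + 1).choose 2 ≤ (3 : ℕ).choose 2 := Nat.choose_le_choose 2 (by omega)
    have : (3 : ℕ).choose 2 = 3 := rfl
    omega
  have hj : j ≤ j.choose 2 := by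
    obtain ⟨i, rfl⟩ : ∃ i, j = i + 1 := ⟨j - 1, by omega⟩
    have : 0 < i.choose 2 := Nat.choose_pos (by omega)
    rw [hsucc]
    omega
  rw [hsucc] at hkj
  exact ⟨j, k - j.choose 2, by omega, by omega, by omega⟩

namespace Finset

variable {α β : Type*}

theorem exists_subset_le_le_add_card [DecidableEq α] (g : Finset α → ℕ) (hg₀ : g ∅ = 0)
    (hg : ∀ a W, g (insert a W) ≤ g W + #W) (P : Finset α) {t : ℕ} (ht : t ≤ g P + #P) :
    ∃ W ⊆ P, g W ≤ t ∧ t ≤ g W + #W := by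
  induction P using Finset.induction_on with
  | empty => exact ⟨∅, subset_refl _, by simp_all⟩
  | insert a P ha ih =>
    by_cases htP : t ≤ g P + #P
    · obtain ⟨W, hWP, hW⟩ := ih htP
      exact ⟨W, hWP.trans (subset_insert a P), hW⟩
    · exact ⟨insert a P, subset_refl _, by linarith [hg a P], ht⟩

theorem exists_subset_cover_forall_private (r : α → β → Prop) (W : Finset α) (T : Finset β)
    (hT : ∀ y ∈ T, ∃ u ∈ W, r u y) :
    ∃ C ⊆ W, (∀ y ∈ T, ∃ u ∈ C, r u y) ∧
      ∀ u ∈ C, ∃ y ∈ T, r u y ∧ ∀ u' ∈ C, r u' y → u' = u := by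
  classical
  induction W using Finset.strongInduction with
  | H W ih =>
    by_cases hpriv : ∀ u ∈ W, ∃ y ∈ T, r u y ∧ ∀ u' ∈ W, r u' y → u' = u
    · exact ⟨W, subset_refl W, hT, hpriv⟩
    push Not at hpriv
    obtain ⟨u, hu, hshared⟩ := hpriv
    have hcover : ∀ y ∈ T, ∃ u' ∈ W.erase u, r u' y := by
      intro y hy
      obtain ⟨u', hu', hr⟩ := hT y hy
      by_cases h : u' = u
      · obtain ⟨u'', hu'', hr'', hne⟩ := hshared y hy (h ▸ hr)
        exact ⟨u'', mem_erase.2 ⟨hne, hu''⟩, hr''⟩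
      · exact ⟨u', mem_erase.2 ⟨h, hu'⟩, hr⟩
    obtain ⟨C, hC, hC'⟩ := ih _ (erase_ssubset hu) hcover
    exact ⟨C, hC.trans (erase_subset u W), hC'⟩

theorem exists_subset_private_cover_le_card (r : α → β → Prop) [∀ u, DecidablePred (r u)]
    {W : Finset α} {T : Finset β} {p : ℕ} (hT : ∀ y ∈ T, ∃ u ∈ W, r u y)
    (hdeg : ∀ u ∈ W, #{y ∈ T | r u y} < p) (hcard : (p - 1) ^ 2 < #T) :
    ∃ C ⊆ W, p ≤ #C ∧ ∀ u ∈ C, ∃ y ∈ T, r u y ∧ ∀ u' ∈ C, r u' y → u' = u := by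
  classical
  obtain ⟨C, hCW, hCT, hpriv⟩ := exists_subset_cover_forall_private r W T hT
  have hTC : #T ≤ #C * (p - 1) := by
    refine (card_le_card fun y hy => ?_).trans (card_biUnion_le_card_mul C _ (p - 1)
      fun u hu => Nat.le_pred_of_lt (hdeg u (hCW hu)))
    obtain ⟨u, hu, hr⟩ := hCT y hy
    exact mem_biUnion.2 ⟨u, hu, mem_filter.2 ⟨hy, hr⟩⟩
  rw [sq] at hcard
  have := Nat.lt_of_mul_lt_mul_right (hcard.trans_le hTC)
  exact ⟨C, hCW, by omega, hpriv⟩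

end Finset

namespace SimpleGraph

variable {V : Type*} (G : SimpleGraph V)

theorem exists_ramsey_bound : ∀ s t : ℕ, ∃ N, ∀ {W : Type} (H : SimpleGraph W) (X : Finset W),
    N ≤ #X → ∃ S ⊆ X, (#S = s ∧ H.IsClique (S : Set W)) ∨ (#S = t ∧ H.IsIndepSet (S : Set W))
  | 0, _ => ⟨0, fun _ _ _ => ⟨∅, empty_subset _, Or.inl ⟨rfl, by simp⟩⟩⟩
  | _ + 1, 0 => ⟨0, fun _ _ _ => ⟨∅, empty_subset _, Or.inr ⟨rfl, by simp⟩⟩⟩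
  | s + 1, t + 1 => by
    classical
    obtain ⟨N₁, h₁⟩ := exists_ramsey_bound s (t + 1)
    obtain ⟨N₂, h₂⟩ := exists_ramsey_bound (s + 1) t
    refine ⟨N₁ + N₂ + 1, fun H X hX => ?_⟩
    obtain ⟨v, hv⟩ : X.Nonempty := card_pos.1 (by omega)
    set A := (X.erase v).filter (H.Adj v)
    set B := (X.erase v).filter (fun u => ¬ H.Adj v u)
    have hAB : #A + #B + 1 = #X := by
      rw [card_filter_add_card_filter_not, card_erase_add_one hv]
    have hAX : A ⊆ X := (filter_subset _ _).trans (erase_subset _ _)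
    have hBX : B ⊆ X := (filter_subset _ _).trans (erase_subset _ _)
    have hvS {S : Finset _} (hS : S ⊆ X.erase v) : #(insert v S) = #S + 1 :=
      card_insert_of_notMem fun h => notMem_erase v X (hS h)
    rcases (by omega : N₁ ≤ #A ∨ N₂ ≤ #B) with hA | hB
    · obtain ⟨S, hSA, ⟨hS, hcl⟩ | hind⟩ := h₁ H A hA
      · refine ⟨insert v S, insert_subset hv (hSA.trans hAX), Or.inl ⟨?_, ?_⟩⟩
        · rw [hvS (hSA.trans (filter_subset _ _)), hS]
        · rw [coe_insert]
          exact hcl.insert fun b hb _ => (mem_filter.1 (hSA hb)).2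
      · exact ⟨S, hSA.trans hAX, Or.inr hind⟩
    · obtain ⟨S, hSB, hcl | ⟨hS, hind⟩⟩ := h₂ H B hB
      · exact ⟨S, hSB.trans hBX, Or.inl hcl⟩
      · refine ⟨insert v S, insert_subset hv (hSB.trans hBX), Or.inr ⟨?_, ?_⟩⟩
        · rw [hvS (hSB.trans (filter_subset _ _)), hS]
        · rw [coe_insert, ← isClique_compl]
          rw [← isClique_compl] at hind
          refine hind.insert fun b hb hvb => (compl_adj H v b).2 ⟨hvb, ?_⟩
          exact (mem_filter.1 (hSB hb)).2

theorem exists_isClique_or_isIndepSet_of_ramseyNumber_le {k : ℕ} (X : Finset V)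
    (h : ramseyNumber k ≤ #X) :
    ∃ S ⊆ X, #S = k ∧ (G.IsClique (S : Set V) ∨ G.IsIndepSet (S : Set V)) := by
  obtain ⟨N, hN⟩ := exists_ramsey_bound k k
  have hR : ramseyNumber k ∈ _ := Nat.sInf_mem ⟨N, fun W _ H hW => by
    obtain ⟨S, -, ⟨hS, hcl⟩ | ⟨hS, hind⟩⟩ := hN H univ hW
    exacts [Or.inl ⟨S, hS, fun u hu w hw => hcl hu hw⟩,
      Or.inr ⟨S, hS, fun u hu w hw => hind hu hw⟩]⟩
  -- `ramseyNumber` only speaks about graphs on types in `Type`, so pass through `Fin #X`.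
  let e : Fin #X ↪ V := X.equivFin.symm.toEmbedding.trans (Function.Embedding.subtype _)
  have hmap {r : V → V → Prop} {S : Finset (Fin #X)}
      (hS : ∀ i ∈ S, ∀ j ∈ S, i ≠ j → r (e i) (e j)) : (S.map e : Set V).Pairwise r := by
    rw [coe_map, e.injective.injOn.pairwise_image]
    exact fun i hi j hj => hS i hi j hj
  obtain ⟨S, hS, hS'⟩ : ∃ S : Finset (Fin #X), #S = k ∧
      ((∀ i ∈ S, ∀ j ∈ S, i ≠ j → G.Adj (e i) (e j)) ∨
        (∀ i ∈ S, ∀ j ∈ S, i ≠ j → ¬ G.Adj (e i) (e j))) := by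
    rcases hR (Fin #X) inferInstance (G.comap e) (by simpa using h) with ⟨S, hS, h⟩ | ⟨S, hS, h⟩
    exacts [⟨S, hS, Or.inl h⟩, ⟨S, hS, Or.inr h⟩]
  refine ⟨S.map e, fun _ hv => ?_, by simpa using hS, hS'.imp hmap hmap⟩
  obtain ⟨i, -, rfl⟩ := mem_map.1 hv
  exact (X.equivFin.symm i).2

noncomputable def inducedEdgeCount (S : Finset V) : ℕ := {e ∈ G.edgeSet | ∀ v ∈ e, v ∈ S}.ncard

variable [DecidableRel G.Adj]

lemma inducedEdgeCount_eq_card_filter_sym2 (S : Finset V) :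
    G.inducedEdgeCount S = #{e ∈ S.sym2 | e ∈ G.edgeSet} := by
  rw [inducedEdgeCount, ← Set.ncard_coe_finset]
  congr 1
  ext e
  simp [mem_sym2_iff, and_comm]

lemma inducedEdgeCount_eq_zero {S : Finset V} (hS : G.IsIndepSet S) :
    G.inducedEdgeCount S = 0 := by
  rw [inducedEdgeCount_eq_card_filter_sym2, card_eq_zero, filter_eq_empty_iff]
  intro e he
  induction e using Sym2.ind with
  | _ a b =>
    rw [mk_mem_sym2_iff] at he
    exact fun hab => hS he.1 he.2 (G.ne_of_adj hab) hab

variable [DecidableEq V]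

lemma inducedEdgeCount_insert {a : V} {S : Finset V} (ha : a ∉ S) :
    G.inducedEdgeCount (insert a S) = G.inducedEdgeCount S + #{b ∈ S | G.Adj a b} := by
  have hdisj : Disjoint {e ∈ (insert a S).image (s(a, ·)) | e ∈ G.edgeSet}
      {e ∈ S.sym2 | e ∈ G.edgeSet} := by
    refine disjoint_filter_filter (Finset.disjoint_left.2 ?_)
    simp only [mem_image, mem_sym2_iff]
    rintro _ ⟨b, -, rfl⟩ h
    exact ha (h a (Sym2.mem_mk_left a b))
  have hfilter : {b ∈ insert a S | G.Adj a b} = {b ∈ S | G.Adj a b} := by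
    rw [filter_insert, if_neg (G.loopless.irrefl a)]
  rw [inducedEdgeCount_eq_card_filter_sym2, inducedEdgeCount_eq_card_filter_sym2, sym2_insert,
    filter_union, card_union_of_disjoint hdisj, add_comm, filter_image,
    card_image_of_injective _ (fun b c h => Sym2.congr_right.1 h)]
  simp only [mem_edgeSet, hfilter]

lemma inducedEdgeCount_insert_le (a : V) (S : Finset V) :
    G.inducedEdgeCount (insert a S) ≤ G.inducedEdgeCount S + #S := by
  by_cases ha : a ∈ S
  · rw [insert_eq_of_mem ha]
    exact Nat.le_add_right _ _
  · rw [G.inducedEdgeCount_insert ha]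
    exact Nat.add_le_add_left (card_filter_le _ _) _

lemma inducedEdgeCount_union_of_isClique {A B : Finset V} (hB : G.IsClique (B : Set V))
    (hAB : Disjoint A B) :
    G.inducedEdgeCount (A ∪ B) =
      G.inducedEdgeCount A + (#B).choose 2 + ∑ b ∈ B, #{a ∈ A | G.Adj b a} := by
  induction B using Finset.induction_on with
  | empty => simp
  | insert b B hb ih =>
    rw [disjoint_insert_right] at hAB
    have hB' : G.IsClique (B : Set V) := hB.subset (by simp)
    have hbB : ∀ c ∈ B, G.Adj b c := fun c hc =>
      hB (by simp) (by simp [hc]) (by rintro rfl; exact hb hc)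
    rw [union_insert, G.inducedEdgeCount_insert (by simp [hAB.1, hb]), ih hB' hAB.2,
      sum_insert hb, card_insert_of_notMem hb, Nat.choose_succ_succ', Nat.choose_one_right,
      filter_union, card_union_of_disjoint (disjoint_filter_filter hAB.2),
      filter_true_of_mem hbB]
    ring

theorem hasKEdgeInducedSubgraph_of_isIndepSet {v : V} {I : Finset V} (hI : G.IsIndepSet I)
    (hvI : ∀ a ∈ I, G.Adj v a) : HasKEdgeInducedSubgraph G #I := by
  have hv : v ∉ I := fun h => G.loopless.irrefl v (hvI v h)
  refine ⟨I ∪ {v}, by simp, ?_⟩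
  change G.inducedEdgeCount _ = _
  rw [G.inducedEdgeCount_union_of_isClique (by simp) (disjoint_singleton_right.2 hv),
    G.inducedEdgeCount_eq_zero hI, card_singleton, sum_singleton, filter_true_of_mem hvI]
  simp

theorem hasKEdgeInducedSubgraph_two {u v w : V} (huv : G.Adj u v) (huw : G.Adj u w)
    (hvw : ¬ G.Adj v w) (hne : v ≠ w) : HasKEdgeInducedSubgraph G 2 := by
  have hpair : G.IsIndepSet ({v, w} : Finset V) := by
    rw [coe_pair, IsIndepSet, Set.pairwise_pair]
    exact fun _ => ⟨hvw, fun h => hvw h.symm⟩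
  have h := G.hasKEdgeInducedSubgraph_of_isIndepSet hpair (v := u) <| by
    simpa only [mem_insert, mem_singleton, forall_eq_or_imp, forall_eq] using ⟨huv, huw⟩
  rwa [card_pair hne] at h

lemma sum_card_filter_adj_image_eq_card_inter {Q L W : Finset V} {x : V → V}
    (hx : ∀ a ∈ Q, G.Adj a (x a)) (hpriv : ∀ a ∈ Q, ∀ b ∈ Q, G.Adj b (x a) → b = a)
    (hLQ : L ⊆ Q) (hWQ : W ⊆ Q) :
    ∑ b ∈ L, #{c ∈ W.image x | G.Adj b c} = #(L ∩ W) := by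
  have hfilter : ∀ b ∈ L, {c ∈ W.image x | G.Adj b c} = if b ∈ W then {x b} else ∅ := by
    intro b hb
    ext c
    simp only [mem_filter, mem_image]
    split_ifs with hbW
    · constructor
      · rintro ⟨⟨a, ha, rfl⟩, hadj⟩
        rw [hpriv a (hWQ ha) b (hLQ hb) hadj, mem_singleton]
      · rintro hc
        rw [mem_singleton.1 hc]
        exact ⟨⟨b, hbW, rfl⟩, hx b (hLQ hb)⟩
    · simp only [notMem_empty, iff_false, not_and]
      rintro ⟨a, ha, rfl⟩ hadj
      exact hbW (hpriv a (hWQ ha) b (hLQ hb) hadj ▸ ha)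
  rw [sum_congr rfl fun b hb => congrArg card (hfilter b hb), ← filter_mem_eq_inter, card_filter]
  exact sum_congr rfl fun b _ => by split_ifs <;> rfl

lemma inducedEdgeCount_image_union_of_private {Q L W : Finset V} (hQ : G.IsClique (Q : Set V))
    {x : V → V} (hx : ∀ a ∈ Q, G.Adj a (x a)) (hxQ : ∀ a ∈ Q, x a ∉ Q)
    (hpriv : ∀ a ∈ Q, ∀ b ∈ Q, G.Adj b (x a) → b = a) (hLQ : L ⊆ Q) (hWQ : W ⊆ Q) :
    G.inducedEdgeCount (W.image x ∪ L) =
      G.inducedEdgeCount (W.image x) + (#L).choose 2 + #(L ∩ W) := by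
  have hdisj : Disjoint (W.image x) L := Finset.disjoint_left.2 fun c hc hcL => by
    obtain ⟨a, ha, rfl⟩ := mem_image.1 hc
    exact hxQ a (hWQ ha) (hLQ hcL)
  rw [G.inducedEdgeCount_union_of_isClique (hQ.subset (by exact_mod_cast hLQ)) hdisj,
    G.sum_card_filter_adj_image_eq_card_inter hx hpriv hLQ hWQ]

theorem hasKEdgeInducedSubgraph_of_isClique_of_private {Q : Finset V}
    (hQ : G.IsClique (Q : Set V)) (hk : 2 ≤ #Q) (x : V → V) (hx : ∀ a ∈ Q, G.Adj a (x a))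
    (hxQ : ∀ a ∈ Q, x a ∉ Q) (hpriv : ∀ a ∈ Q, ∀ b ∈ Q, G.Adj b (x a) → b = a) :
    HasKEdgeInducedSubgraph G #Q := by
  rcases hk.eq_or_lt with hk | hk
  · obtain ⟨a, b, hab, rfl⟩ := card_eq_two.1 hk.symm
    have ha : a ∈ ({a, b} : Finset V) := mem_insert_self a {b}
    have hb : b ∈ ({a, b} : Finset V) := mem_insert_of_mem (mem_singleton_self b)
    rw [← hk]
    exact G.hasKEdgeInducedSubgraph_two (hQ ha hb hab) (hx a ha)
      (fun h => hab (hpriv a ha b hb h).symm) (fun h => hxQ a ha (h ▸ hb))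
  -- `Q` is split into a pool `P` of `#Q - j` vertices whose pendants may be added, and the rest;
  -- the set built below is `x '' W` for some `W ⊆ P` together with a clique on `j` vertices of `Q`
  -- meeting `W` in exactly `t - e(x '' W)` vertices, one pendant edge each.
  obtain ⟨j, t, hjt, htj, hjk⟩ := Nat.exists_choose_two_add hk
  obtain ⟨P, hPQ, hP⟩ := exists_subset_card_eq (show #Q - j ≤ #Q by omega)
  set g : Finset V → ℕ := fun W => G.inducedEdgeCount (W.image x)
  have hg : ∀ a W, g (insert a W) ≤ g W + #W := fun a W => by
    simp only [g, image_insert]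
    exact (G.inducedEdgeCount_insert_le _ _).trans (Nat.add_le_add_left card_image_le _)
  obtain ⟨W, hWP, hgW, htW⟩ :=
    exists_subset_le_le_add_card g (by simp [g, inducedEdgeCount_eq_zero]) hg P (t := t) (by omega)
  have hWQ := hWP.trans hPQ
  obtain ⟨O, hOW, hO⟩ := exists_subset_card_eq (show t - g W ≤ #W by omega)
  obtain ⟨B, hBQW, hB⟩ := exists_subset_card_eq (show j - (t - g W) ≤ #(Q \ W) by
    rw [card_sdiff_of_subset hWQ]; have := card_le_card hWP; omega)
  have hOB : Disjoint O B := disjoint_of_subset_left hOW (subset_sdiff.1 hBQW).2.symm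
  have hLQ : O ∪ B ⊆ Q := union_subset (hOW.trans hWQ) (hBQW.trans sdiff_subset)
  have hLW : (O ∪ B) ∩ W = O := by
    rw [union_inter_distrib_right, inter_eq_left.2 hOW,
      disjoint_iff_inter_eq_empty.1 (subset_sdiff.1 hBQW).2, union_empty]
  have hL : #(O ∪ B) = j := by rw [card_union_of_disjoint hOB]; omega
  refine ⟨W.image x ∪ (O ∪ B), ?_, ?_⟩
  · exact (card_pos.1 (by omega : 0 < #(O ∪ B))).mono subset_union_right
  change G.inducedEdgeCount _ = _
  rw [G.inducedEdgeCount_image_union_of_private hQ hx hxQ hpriv hLQ hWQ, hLW, hL]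
  change g W + _ + _ = _
  omega

end SimpleGraph

theorem claim2_large_NW2 {V : Type*} [Fintype V] [DecidableEq V] (G : SimpleGraph V)
    [DecidableRel G.Adj] (k p : ℕ) (hp : ramseyNumber k ≤ p) (v0 : V)
    (hNW2 : (p - 1) ^ 2 <
      ((Finset.univ \ G.neighborFinset v0).filter fun w =>
        ∃ u ∈ ((G.neighborFinset v0).filter fun u =>
          (G.neighborFinset u ∩ (Finset.univ \ G.neighborFinset v0)).card < p),
        G.Adj u w).card) :
    HasKEdgeInducedSubgraph G k := by
  set V₂ := univ \ G.neighborFinset v0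
  set W₂ := (G.neighborFinset v0).filter fun u => #(G.neighborFinset u ∩ V₂) < p
  set T := V₂.filter fun w => ∃ u ∈ W₂, G.Adj u w
  have hW₂ (u : V) (hu : u ∈ W₂) : G.Adj v0 u ∧ #(G.neighborFinset u ∩ V₂) < p := by
    simpa [W₂] using hu
  have hT (w : V) (hw : w ∈ T) : ¬ G.Adj v0 w ∧ ∃ u ∈ W₂, G.Adj u w := by
    simpa [T, V₂] using hw
  have hdeg (u : V) (hu : u ∈ W₂) : #{w ∈ T | G.Adj u w} < p :=
    (card_le_card fun w hw => by simp_all [T]).trans_lt (hW₂ u hu).2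
  obtain ⟨C, hCW, hpC, hpriv⟩ :=
    exists_subset_private_cover_le_card G.Adj (fun w hw => (hT w hw).2) hdeg hNW2
  obtain ⟨S, hSC, rfl, hS⟩ := G.exists_isClique_or_isIndepSet_of_ramseyNumber_le C (hp.trans hpC)
  have hv0S (a : V) (ha : a ∈ S) : G.Adj v0 a := (hW₂ a (hCW (hSC ha))).1
  by_cases hSi : G.IsIndepSet S
  · exact G.hasKEdgeInducedSubgraph_of_isIndepSet hSi hv0S
  have h2S : 2 ≤ #S := by
    by_contra! h
    exact hSi (Set.Subsingleton.pairwise (fun a ha b hb => card_le_one.1 (by omega) a ha b hb) _)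
  choose! x hxT hx hxpriv using hpriv
  exact G.hasKEdgeInducedSubgraph_of_isClique_of_private (hS.resolve_right hSi) h2S x
    (fun a ha => hx a (hSC ha)) (fun a ha hxa => (hT _ (hxT a (hSC ha))).1 (hv0S _ hxa))
    (fun a ha b hb => hxpriv a (hSC ha) b (hSC hb))
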